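/- arXiv:1710.10771 — 9 statements merged into one kernel-verified Lean document; each statement's English description precedes it below -/
import Mathlib

section
/- The equivalence relation E₀ is not smooth: there is no Borel map f : (ℕ → Bool) → ℝ such that for all x, y one has x E₀ y if and only if f x = f y. -/
open Topology Set Filter


/-- The equivalence relation `E₀` on `ℕ → Bool`: eventual equality. -/
def E0 (x y : ℕ → Bool) : Prop := ∃ N : ℕ, ∀ n ≥ N, x n = y n

def cyl (x : ℕ → Bool) (n : ℕ) : Set (ℕ → Bool) := {y | ∀ i < n, y i = x i}

lemma isOpen_cyl (x : ℕ → Bool) (n : ℕ) : IsOpen (cyl x n) := by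
  have : cyl x n = ⋂ i ∈ Finset.range n, (fun y : ℕ → Bool => y i) ⁻¹' {x i} := by
    ext y; simp [cyl]
  rw [this]
  exact isOpen_biInter_finset fun i _ =>
    (continuous_apply i).isOpen_preimage _ (isOpen_discrete _)

lemma mem_cyl_self (x : ℕ → Bool) (n : ℕ) : x ∈ cyl x n := fun _ _ => rfl

lemma exists_cyl_subset {u : Set (ℕ → Bool)} (hu : IsOpen u) {x : ℕ → Bool} (hx : x ∈ u) :
    ∃ n, cyl x n ⊆ u := by
  rcases isOpen_pi_iff.mp hu x hx with ⟨I, v, hv, hsub⟩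
  rcases I.bddAbove with ⟨N, hN⟩
  refine ⟨N + 1, fun y hy => hsub fun i hi => ?_⟩
  have : y i = x i := hy i (Nat.lt_succ_of_le (hN hi))
  exact this ▸ (hv i hi).2

def xorHomeo (c : ℕ → Bool) : (ℕ → Bool) ≃ₜ (ℕ → Bool) where
  toFun x := fun i => xor (x i) (c i)
  invFun x := fun i => xor (x i) (c i)
  left_inv x := by funext i; simp [Bool.xor_assoc]
  right_inv x := by funext i; simp [Bool.xor_assoc]
  continuous_toFun := continuous_pi fun i =>
    (continuous_of_discreteTopology (f := fun b : Bool => xor b (c i))).comp (continuous_apply i)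
  continuous_invFun := continuous_pi fun i =>
    (continuous_of_discreteTopology (f := fun b : Bool => xor b (c i))).comp (continuous_apply i)

lemma nonmeager_of_isOpen_nonempty {u : Set (ℕ → Bool)} (hu : IsOpen u) (hne : u.Nonempty) :
    ¬ IsMeagre u := by
  intro h
  rcases hne with ⟨x, hx⟩
  rcases (dense_of_mem_residual h).inter_open_nonempty u hu ⟨x, hx⟩ with ⟨y, hy, hyc⟩
  exact hyc hy

lemma meagre_of_eq_empty {s : Set (ℕ → Bool)} (h : s =ᵇ (∅ : Set (ℕ → Bool))) : IsMeagre s := by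
  rw [IsMeagre]
  filter_upwards [h] with x hx
  intro hxs
  have : (x ∈ s) = (x ∈ (∅ : Set (ℕ → Bool))) := hx
  rw [this] at hxs
  exact hxs

/-- Topological zero-one law for `E0`. -/
lemma zero_one {s : Set (ℕ → Bool)} (hs : BaireMeasurableSet s)
    (hinv : ∀ x y, E0 x y → (x ∈ s ↔ y ∈ s)) : IsMeagre s ∨ IsMeagre sᶜ := by
  by_contra h
  push_neg at h
  obtain ⟨h1, h2⟩ := h
  obtain ⟨u, huo, hsu⟩ := hs.residualEq_isOpen
  obtain ⟨v, hvo, hsv⟩ := hs.compl.residualEq_isOpen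
  have hune : u.Nonempty := by
    rcases u.eq_empty_or_nonempty with rfl | h
    · exact absurd (meagre_of_eq_empty hsu) h1
    · exact h
  have hvne : v.Nonempty := by
    rcases v.eq_empty_or_nonempty with rfl | h
    · exact absurd (meagre_of_eq_empty hsv) h2
    · exact h
  obtain ⟨x, hx⟩ := hune
  obtain ⟨y, hy⟩ := hvne
  obtain ⟨n, hn⟩ := exists_cyl_subset huo hx
  obtain ⟨m, hm⟩ := exists_cyl_subset hvo hy
  set N := max n m with hN
  have hxu : cyl x N ⊆ u := fun z hz => hn fun i hi => hz i (lt_of_lt_of_le hi (le_max_left n m))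
  have hyv : cyl y N ⊆ v := fun z hz => hm fun i hi => hz i (lt_of_lt_of_le hi (le_max_right n m))
  set c : ℕ → Bool := fun i => if i < N then xor (x i) (y i) else false with hc
  set g := xorHomeo c with hg
  -- g maps cyl y N into cyl x N
  have hmap : ∀ z ∈ cyl y N, g z ∈ cyl x N := by
    intro z hz i hi
    show xor (z i) (c i) = x i
    rw [hc]
    simp only [if_pos hi]
    rw [hz i hi]
    cases x i <;> cases y i <;> rfl
  -- g z E0 z
  have hE : ∀ z, E0 z (g z) := by
    intro z
    refine ⟨N, fun i hi => ?_⟩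
    show z i = xor (z i) (c i)
    rw [hc]
    simp [Nat.not_lt_of_ge hi]
  -- s = g ⁻¹' s
  have hinv' : g ⁻¹' s = s := by
    ext z
    exact (hinv z (g z) (hE z)).symm
  -- pull hsu back along g
  have hres : Tendsto g (residual _) (residual _) :=
    tendsto_residual_of_isOpenMap g.continuous g.isOpenMap
  have hsu' : s =ᵇ (g ⁻¹' u) := by
    have := hres.eventually hsu
    filter_upwards [this] with z hz
    have : (g z ∈ s) = (g z ∈ u) := hz
    show (z ∈ s) = (g z ∈ u)
    rw [propext (hinv z (g z) (hE z))]
    exact hz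
  -- now (g ⁻¹' u) ∩ v is meagre
  have hmeag : IsMeagre ((g ⁻¹' u) ∩ v) := by
    rw [IsMeagre]
    filter_upwards [hsu', hsv] with z hz1 hz2
    intro hz
    have e1 : (z ∈ s) = (z ∈ g ⁻¹' u) := hz1
    have e2 : (z ∈ sᶜ) = (z ∈ v) := hz2
    have : z ∈ s := e1 ▸ hz.1
    have : z ∈ sᶜ := e2 ▸ hz.2
    exact this ‹z ∈ s›
  have : cyl y N ⊆ (g ⁻¹' u) ∩ v := fun z hz => ⟨hxu (hmap z hz), hyv hz⟩
  exact nonmeager_of_isOpen_nonempty (isOpen_cyl y N) ⟨y, mem_cyl_self y N⟩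
    (hmeag.mono this)

lemma countable_class (x : ℕ → Bool) : {y | E0 y x}.Countable := by
  have h : {y | E0 y x} = ⋃ N : ℕ, {y | ∀ n ≥ N, y n = x n} := by
    ext y; simp [E0, Set.mem_iUnion]
  rw [h]
  refine Set.countable_iUnion fun N => ?_
  have hsub : {y : ℕ → Bool | ∀ n ≥ N, y n = x n} ⊆
      Set.range (fun v : Fin N → Bool => fun n => if h : n < N then v ⟨n, h⟩ else x n) := by
    intro y hy
    refine ⟨fun i => y i, ?_⟩
    funext n
    by_cases h : n < N
    · simp [h]
    · simp [h, hy n (le_of_not_gt h)]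
  exact (Set.countable_range _).mono hsub

lemma nowhereDense_singleton (x : ℕ → Bool) : IsNowhereDense {x} := by
  rw [isClosed_singleton.isNowhereDense_iff]
  by_contra h
  obtain ⟨z, hz⟩ := Set.nonempty_iff_ne_empty.mpr h
  obtain ⟨u, hu, huo, hzu⟩ := mem_interior.mp hz
  have hzx : z = x := hu hzu
  subst hzx
  obtain ⟨n, hn⟩ := exists_cyl_subset huo hzu
  have hmem : Function.update z n (!(z n)) ∈ cyl z n := by
    intro i hi
    rw [Function.update_of_ne (Nat.ne_of_lt hi)]
  have := hu (hn hmem)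
  rw [Set.mem_singleton_iff] at this
  have := congrFun this n
  simp [Function.update_self] at this

lemma isMeagre_of_countable {s : Set (ℕ → Bool)} (hs : s.Countable) : IsMeagre s := by
  rw [isMeagre_iff_countable_union_isNowhereDense]
  refine ⟨(fun x => ({x} : Set (ℕ → Bool))) '' s, ?_, hs.image _, ?_⟩
  · rintro t ⟨x, -, rfl⟩
    exact nowhereDense_singleton x
  · intro x hx
    exact ⟨{x}, ⟨x, hx, rfl⟩, rfl⟩

/-- `E₀` is not smooth: there is no Borel map `f : (ℕ → Bool) → ℝ` such that
`x E₀ y ↔ f x = f y`. -/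
theorem stmt_1 :
    ¬ ∃ f : (ℕ → Bool) → ℝ, Measurable f ∧ ∀ x y : ℕ → Bool, E0 x y ↔ f x = f y := by

  rintro ⟨f, hf, hE⟩
  set S : ℕ → ℤ → Set (ℕ → Bool) :=
    fun n k => f ⁻¹' Set.Ico ((k : ℝ) / (n + 1)) (((k : ℝ) + 1) / (n + 1)) with hS
  have hpos : ∀ n : ℕ, (0 : ℝ) < n + 1 := fun n => by positivity
  have hSmeas : ∀ n k, BaireMeasurableSet (S n k) :=
    fun n k => (hf measurableSet_Ico).baireMeasurableSet
  have hSinv : ∀ n k, ∀ x y, E0 x y → (x ∈ S n k ↔ y ∈ S n k) := by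
    intro n k x y hxy
    have : f x = f y := (hE x y).mp hxy
    simp [hS, Set.mem_preimage, this]
  -- for each n some S n k is comeager
  have hKey : ∀ n, ∃ k, (S n k) ∈ residual (ℕ → Bool) := by
    intro n
    by_contra hcon
    push_neg at hcon
    have hall : ∀ k, IsMeagre (S n k) := by
      intro k
      rcases zero_one (hSmeas n k) (hSinv n k) with h | h
      · exact h
      · exact absurd (by rwa [IsMeagre, compl_compl] at h) (hcon k)
    have hcover : (Set.univ : Set (ℕ → Bool)) ⊆ ⋃ m : ℕ, S n (Denumerable.ofNat ℤ m) := by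
      rintro x -
      obtain ⟨k, h1, h2⟩ : ∃ k : ℤ, (k : ℝ) ≤ f x * (n + 1) ∧ f x * (n + 1) < k + 1 :=
        ⟨⌊f x * (n + 1)⌋, Int.floor_le _, Int.lt_floor_add_one _⟩
      refine Set.mem_iUnion.mpr ⟨Encodable.encode k, ?_⟩
      rw [Denumerable.ofNat_encode]
      refine ⟨?_, ?_⟩
      · rw [div_le_iff₀ (hpos n)]; linarith
      · rw [lt_div_iff₀ (hpos n)]; linarith
    exact nonmeager_of_isOpen_nonempty isOpen_univ Set.univ_nonempty
      ((isMeagre_iUnion fun m => hall _).mono hcover)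
  choose k hk using hKey
  -- the comeager intersection
  have hC : (⋂ n, S n (k n)) ∈ residual (ℕ → Bool) :=
    (countable_iInter_mem.mpr hk)
  set C := ⋂ n, S n (k n) with hCdef
  obtain ⟨x₀, hx₀⟩ : C.Nonempty := by
    rcases (dense_of_mem_residual hC).inter_open_nonempty Set.univ isOpen_univ
      Set.univ_nonempty with ⟨x, -, hx⟩
    exact ⟨x, hx⟩
  -- every point of C is E0-equivalent to x₀
  have hclass : ∀ z ∈ C, E0 z x₀ := by
    intro z hz
    refine (hE z x₀).mpr ?_
    refine eq_of_forall_dist_le fun ε hε => ?_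
    obtain ⟨n, hn⟩ := exists_nat_one_div_lt hε
    have hz' : f z ∈ Set.Ico ((k n : ℝ) / (n + 1)) (((k n : ℝ) + 1) / (n + 1)) :=
      Set.mem_iInter.mp hz n
    have hx' : f x₀ ∈ Set.Ico ((k n : ℝ) / (n + 1)) (((k n : ℝ) + 1) / (n + 1)) :=
      Set.mem_iInter.mp hx₀ n
    have hw : ((k n : ℝ) + 1) / (n + 1) = (k n : ℝ) / (n + 1) + 1 / (n + 1) := by
      rw [add_div]
    rw [hw] at hz' hx'
    have habs : |f z - f x₀| < 1 / (n + 1) := by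
      rw [abs_sub_lt_iff]
      constructor
      · linarith [hz'.2, hx'.1]
      · linarith [hx'.2, hz'.1]
    rw [Real.dist_eq]
    exact le_of_lt (lt_trans habs hn)
  -- contradiction with countability of the class
  have hmeag : IsMeagre {y | E0 y x₀} := isMeagre_of_countable (countable_class x₀)
  have hres2 : C ∩ {y | E0 y x₀}ᶜ ∈ residual (ℕ → Bool) := Filter.inter_mem hC hmeag
  obtain ⟨z, hzC, hznot⟩ : (C ∩ {y | E0 y x₀}ᶜ).Nonempty := by
    rcases (dense_of_mem_residual hres2).inter_open_nonempty Set.univ isOpen_univ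
      Set.univ_nonempty with ⟨z, -, hz⟩
    exact ⟨z, hz⟩
  exact hznot (hclass z hzC)
end

section
/- For every x ∈ ℝ^ℕ, the coset x + ℓ¹ = { x + a : a ∈ ℓ¹ } (the orbit of x under the translation action of ℓ¹ on ℝ^ℕ) is both dense and meager in ℝ^ℕ. -/
/-- For every `x ∈ ℝ^ℕ`, the coset `x + ℓ¹` (the orbit of `x` under the translation action
of `ℓ¹` on `ℝ^ℕ` with the product topology) is dense and meager in `ℝ^ℕ`. -/
theorem stmt_2 (x : ℕ → ℝ) :
    Dense {y : ℕ → ℝ | Summable fun n => |y n - x n|} ∧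
    IsMeagre {y : ℕ → ℝ | Summable fun n => |y n - x n|} := by
  constructor
  · rw [dense_iff_inter_open]
    intro U hU ⟨f, hf⟩
    obtain ⟨I, u, hu, hpi⟩ := isOpen_pi_iff.mp hU f hf
    refine ⟨fun n => if n ∈ I then f n else x n, hpi ?_, ?_⟩
    · intro n hn
      simpa [Finset.mem_coe.mp hn] using (hu n (Finset.mem_coe.mp hn)).2
    · apply summable_of_ne_finset_zero (s := I)
      intro n hn
      simp [if_neg hn]
  · rw [isMeagre_iff_countable_union_isNowhereDense]
    refine ⟨Set.range (fun M : ℕ =>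
      {y : ℕ → ℝ | ∀ N, ∑ n ∈ Finset.range N, |y n - x n| ≤ M}), ?_, Set.countable_range _, ?_⟩
    · rintro t ⟨M, rfl⟩
      have hclosed : IsClosed {y : ℕ → ℝ | ∀ N, ∑ n ∈ Finset.range N, |y n - x n| ≤ M} := by
        have : {y : ℕ → ℝ | ∀ N, ∑ n ∈ Finset.range N, |y n - x n| ≤ M} =
            ⋂ N, {y : ℕ → ℝ | ∑ n ∈ Finset.range N, |y n - x n| ≤ M} := by
          ext y; simp [Set.mem_iInter]
        rw [this]
        refine isClosed_iInter fun N => isClosed_le ?_ continuous_const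
        exact continuous_finset_sum _ fun n _ => ((continuous_apply n).sub continuous_const).abs
      rw [hclosed.isNowhereDense_iff]
      rw [Set.eq_empty_iff_forall_notMem]
      intro y hy
      obtain ⟨I, u, hu, hpi⟩ := isOpen_pi_iff.mp isOpen_interior y hy
      obtain ⟨n, hn⟩ := I.exists_notMem
      set z : ℕ → ℝ := fun k => if k = n then x n + (M + 1) else y k with hz
      have hzmem : z ∈ {y : ℕ → ℝ | ∀ N, ∑ n ∈ Finset.range N, |y n - x n| ≤ M} :=
        interior_subset <| hpi fun k hk => by
          have : k ≠ n := fun h => hn (h ▸ hk)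
          simpa [hz, this] using (hu k hk).2
      have h1 := hzmem (n + 1)
      have h2 : |z n - x n| ≤ ∑ k ∈ Finset.range (n + 1), |z k - x k| :=
        Finset.single_le_sum (f := fun k => |z k - x k|) (fun k _ => abs_nonneg _) (Finset.self_mem_range_succ n)
      simp only [hz, if_pos rfl] at h2
      have : |(M : ℝ) + 1| ≤ M := by
        calc |(M : ℝ) + 1| = |x n + (M + 1) - x n| := by ring_nf
        _ ≤ _ := le_trans h2 h1
      rw [abs_of_nonneg (by positivity)] at this
      linarith
    · intro y hy
      simp only [Set.mem_setOf_eq] at hy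
      refine Set.mem_sUnion.mpr ⟨_, ⟨⌈∑' n, |y n - x n|⌉₊, rfl⟩, fun N => ?_⟩
      calc ∑ n ∈ Finset.range N, |y n - x n| ≤ ∑' n, |y n - x n| :=
            Summable.sum_le_tsum _ (fun n _ => abs_nonneg _) hy
        _ ≤ _ := Nat.le_ceil _
end

section
/- Local orbits of the ℓ¹-translation action on ℝ^ℕ are dense in basic open sets: let x ∈ ℝ^ℕ, l ∈ ℕ and ε > 0, and set U = { z ∈ ℝ^ℕ : |z i − x i| < ε for all i < l }. Then for every nonempty open set U₀ ⊆ U there exist k ∈ ℕ and points x₀, x₁, …, x_k ∈ U with x₀ = x, x_k ∈ U₀, and for every j < k the difference x_{j+1} − x_j lies in ℓ¹ with ∑_n |x_{j+1} n − x_j n| < ε. -/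
/-- Local orbits of the `ℓ¹`-translation action on `ℝ^ℕ` are dense in basic open sets:
with `U = {z | ∀ i < l, |z i - x i| < ε}`, for every nonempty open `U₀ ⊆ U` there is a
finite chain `x = x₀, x₁, …, x_k` of points of `U` ending in `U₀`, each consecutive
difference lying in `ℓ¹` with `‖x_{j+1} - x_j‖₁ < ε`. -/
theorem stmt_3 (x : ℕ → ℝ) (l : ℕ) (ε : ℝ) (hε : 0 < ε)
    (U₀ : Set (ℕ → ℝ)) (hU₀open : IsOpen U₀) (hU₀ne : U₀.Nonempty)
    (hU₀sub : U₀ ⊆ {z : ℕ → ℝ | ∀ i < l, |z i - x i| < ε}) :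
    ∃ (k : ℕ) (p : ℕ → ℕ → ℝ),
      p 0 = x ∧ p k ∈ U₀ ∧
      (∀ j ≤ k, p j ∈ {z : ℕ → ℝ | ∀ i < l, |z i - x i| < ε}) ∧
      (∀ j < k, Summable (fun n => |p (j + 1) n - p j n|) ∧
        ∑' n, |p (j + 1) n - p j n| < ε) := by
  obtain ⟨y, hy⟩ := hU₀ne
  obtain ⟨I, u, hu, hsub⟩ := isOpen_pi_iff.mp hU₀open y hy
  set w : ℕ → ℝ := fun n => if n ∈ I then y n else x n with hw
  have hwU₀ : w ∈ U₀ := by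
    apply hsub
    intro i hi
    have hi' : i ∈ I := hi
    simp only [hw, if_pos hi']
    exact (hu i hi').2
  set D : ℝ := ∑ i ∈ I, |w i - x i| with hD
  have hD0 : 0 ≤ D := Finset.sum_nonneg fun i _ => abs_nonneg _
  obtain ⟨k, hk⟩ : ∃ k : ℕ, k = ⌈D / ε⌉₊ + 1 := ⟨_, rfl⟩
  have hk0 : (0:ℝ) < k := by rw [hk]; positivity
  have hDk : D < k * ε := by
    have h1 : D / ε < (k : ℝ) := by
      calc D / ε ≤ (⌈D / ε⌉₊ : ℝ) := Nat.le_ceil _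
        _ < (k : ℝ) := by rw [hk]; push_cast; linarith
    calc D = D / ε * ε := by field_simp
      _ < k * ε := mul_lt_mul_of_pos_right h1 hε
  have hwx : ∀ i < l, |w i - x i| < ε := by
    intro i hil
    by_cases hi : i ∈ I
    · simpa [hw, hi] using hU₀sub hy i hil
    · simp [hw, hi, hε]
  refine ⟨k, fun j n => x n + (j : ℝ) / k * (w n - x n), ?_, ?_, ?_, ?_⟩
  · funext n; simp
  · have : ∀ n, x n + (k : ℝ) / k * (w n - x n) = w n := by
      intro n; rw [div_self (ne_of_gt hk0)]; ring
    simpa [funext this] using hwU₀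
  · intro j hj i hil
    show |x i + (j : ℝ) / k * (w i - x i) - x i| < ε
    have h1 : (j : ℝ) / k ≤ 1 := by
      rw [div_le_one hk0]; exact_mod_cast hj
    have h2 : (0:ℝ) ≤ (j : ℝ) / k := by positivity
    calc |x i + (j : ℝ) / k * (w i - x i) - x i| = (j : ℝ) / k * |w i - x i| := by
          rw [show x i + (j : ℝ) / k * (w i - x i) - x i = (j : ℝ) / k * (w i - x i) by ring,
            abs_mul, abs_of_nonneg h2]
      _ ≤ 1 * |w i - x i| := mul_le_mul_of_nonneg_right h1 (abs_nonneg _)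
      _ = |w i - x i| := one_mul _
      _ < ε := hwx i hil
  · intro j hj
    have hdiff : ∀ n : ℕ, |x n + ((j + 1 : ℕ) : ℝ) / k * (w n - x n)
        - (x n + (j : ℝ) / k * (w n - x n))| = |w n - x n| / k := by
      intro n
      have : x n + ((j + 1 : ℕ) : ℝ) / k * (w n - x n)
          - (x n + (j : ℝ) / k * (w n - x n)) = (w n - x n) / k := by
        push_cast; field_simp; ring
      rw [this, abs_div, abs_of_pos hk0]
    have hzero : ∀ n ∉ I, |w n - x n| / (k:ℝ) = 0 := by
      intro n hn; simp [hw, hn]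
    constructor
    · apply summable_of_ne_finset_zero (s := I)
      intro n hn
      show |x n + ((j + 1 : ℕ) : ℝ) / k * (w n - x n)
          - (x n + (j : ℝ) / k * (w n - x n))| = 0
      rw [hdiff n]
      exact hzero n hn
    · show (∑' n, |x n + ((j + 1 : ℕ) : ℝ) / k * (w n - x n)
          - (x n + (j : ℝ) / k * (w n - x n))|) < ε
      rw [tsum_congr hdiff, tsum_eq_sum hzero, ← Finset.sum_div, div_lt_iff₀ hk0]
      linarith [hDk]
end

section
/- Let Γ and Λ be countable groups with pmp actions on probability spaces (X, μ) and (Y, ν) respectively, and let θ : X → Y be a measure-preserving measurable map such that for every g ∈ Γ, for μ-almost every x ∈ X, θ(g·x) ∈ Λ·θ(x). If (B_n) is a sequence of measurable subsets of Y with ν(s·B_n Δ B_n) → 0 for every s ∈ Λ, then the sets A_n := θ⁻¹(B_n) satisfy μ(g·A_n Δ A_n) → 0 for every g ∈ Γ. -/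
open MeasureTheory Filter
open scoped Pointwise

/-- Lifting almost invariant sequences through a factor map: if `θ : X → Y` is measure
preserving and maps `Γ`-orbits into `Λ`-orbits a.e., and `(B n)` is a sequence of measurable
sets with `ν (s • B n ∆ B n) → 0` for all `s ∈ Λ`, then `A n := θ⁻¹ (B n)` satisfies
`μ (g • A n ∆ A n) → 0` for every `g ∈ Γ`. -/
theorem stmt_4 {Γ Λ X Y : Type*} [Group Γ] [Countable Γ] [Group Λ] [Countable Λ]
    [MeasurableSpace X] [MeasurableSpace Y] [MulAction Γ X] [MulAction Λ Y]
    (μ : Measure X) (ν : Measure Y) [IsProbabilityMeasure μ] [IsProbabilityMeasure ν]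
    (hΓ : ∀ g : Γ, MeasurePreserving (fun x => g • x) μ μ)
    (hΛ : ∀ s : Λ, MeasurePreserving (fun y => s • y) ν ν)
    (θ : X → Y) (hθ : MeasurePreserving θ μ ν)
    (hfac : ∀ g : Γ, ∀ᵐ x ∂μ, ∃ s : Λ, θ (g • x) = s • θ x)
    (B : ℕ → Set Y) (hB : ∀ n, MeasurableSet (B n))
    (hai : ∀ s : Λ, Tendsto (fun n => ν (symmDiff (s • B n) (B n))) atTop (nhds 0)) :
    ∀ g : Γ, Tendsto (fun n => μ (symmDiff (g • (θ ⁻¹' B n)) (θ ⁻¹' B n))) atTop (nhds 0) := by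
  intro g
  have hθm : Measurable θ := hθ.measurable
  have hgm : Measurable (fun x : X => g • x) := (hΓ g).measurable
  have hfm : Measurable (fun x : X => θ (g • x)) := hθm.comp hgm
  -- smul sets as preimages
  have hsmulY : ∀ (s : Λ) (E : Set Y), s • E = (fun y => s⁻¹ • y) ⁻¹' E := by
    intro s E
    rw [Set.preimage_smul, inv_inv]
  have hBsm : ∀ (s : Λ) (n : ℕ), MeasurableSet (s • B n) := by
    intro s n
    rw [hsmulY]
    exact (hΛ s⁻¹).measurable (hB n)
  -- rewrite the quantity of interest
  have key : ∀ n, μ (symmDiff (g • (θ ⁻¹' B n)) (θ ⁻¹' B n))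
      = μ (symmDiff ((fun x => θ (g • x)) ⁻¹' B n) (θ ⁻¹' B n)) := by
    intro n
    have hA : MeasurableSet (θ ⁻¹' B n) := hθm (hB n)
    have hgA : MeasurableSet (g • (θ ⁻¹' B n)) := by
      have : g • (θ ⁻¹' B n) = (fun x : X => g⁻¹ • x) ⁻¹' (θ ⁻¹' B n) := by
        rw [Set.preimage_smul, inv_inv]
      rw [this]
      exact (hΓ g⁻¹).measurable hA
    have h1 : μ (symmDiff (g • (θ ⁻¹' B n)) (θ ⁻¹' B n))
        = μ ((fun x : X => g • x) ⁻¹' symmDiff (g • (θ ⁻¹' B n)) (θ ⁻¹' B n)) :=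
      ((hΓ g).measure_preimage (hgA.symmDiff hA).nullMeasurableSet).symm
    rw [h1, Set.preimage_symmDiff, Set.preimage_smul, inv_smul_smul, symmDiff_comm]
    rfl
  simp only [key]
  -- the agreement sets
  set C : Λ → Set X := fun s => ⋂ n, {x | θ (g • x) ∈ B n ↔ s • θ x ∈ B n} with hC
  have hCm : ∀ s, MeasurableSet (C s) := by
    intro s
    refine MeasurableSet.iInter fun n => ?_
    have h1 : MeasurableSet {x | θ (g • x) ∈ B n} := hfm (hB n)
    have h2 : MeasurableSet {x | s • θ x ∈ B n} :=
      ((hΛ s).measurable.comp hθm) (hB n)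
    have : {x : X | θ (g • x) ∈ B n ↔ s • θ x ∈ B n}
        = ({x | θ (g • x) ∈ B n} ∩ {x | s • θ x ∈ B n}) ∪
          ({x | θ (g • x) ∈ B n}ᶜ ∩ {x | s • θ x ∈ B n}ᶜ) := by
      ext x; simp only [Set.mem_setOf_eq, Set.mem_union, Set.mem_inter_iff,
        Set.mem_compl_iff, Set.mem_setOf_eq]
      tauto
    rw [this]
    exact (h1.inter h2).union (h1.compl.inter h2.compl)
  -- the union of C s is conull
  have hcover : μ ((⋃ s, C s)ᶜ) = 0 := by
    have : ∀ᵐ x ∂μ, x ∈ ⋃ s, C s := by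
      filter_upwards [hfac g] with x hx
      obtain ⟨s, hs⟩ := hx
      exact Set.mem_iUnion.2 ⟨s, Set.mem_iInter.2 fun n => by
        simp only [Set.mem_setOf_eq, hs]⟩
    rw [Filter.eventually_iff, mem_ae_iff] at this
    exact this
  -- key inclusion: on C s, the symmetric difference is controlled
  have hincl : ∀ (s : Λ) (n : ℕ), C s ∩
      symmDiff ((fun x => θ (g • x)) ⁻¹' B n) (θ ⁻¹' B n)
      ⊆ θ ⁻¹' (symmDiff (s⁻¹ • B n) (B n)) := by
    intro s n x hx
    obtain ⟨hxC, hxD⟩ := hx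
    have hiff : θ (g • x) ∈ B n ↔ s • θ x ∈ B n := Set.mem_iInter.1 hxC n
    rw [Set.mem_symmDiff] at hxD
    simp only [Set.mem_preimage] at hxD ⊢
    rw [Set.mem_symmDiff]
    have hmem : θ x ∈ s⁻¹ • B n ↔ s • θ x ∈ B n :=
      Set.mem_inv_smul_set_iff
    rcases hxD with ⟨h1, h2⟩ | ⟨h1, h2⟩
    · exact Or.inl ⟨hmem.2 (hiff.1 h1), h2⟩
    · exact Or.inr ⟨h1, fun hc => h2 (hiff.2 (hmem.1 hc))⟩
  -- enumeration of Λ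
  obtain ⟨e, he⟩ := exists_surjective_nat Λ
  set U : ℕ → Set X := fun k => ⋃ i ∈ Finset.range k, C (e i) with hU
  have hUm : ∀ k, MeasurableSet (U k) :=
    fun k => Finset.measurableSet_biUnion _ fun i _ => hCm (e i)
  have hUmono : Monotone U := by
    intro a b hab
    intro x hx
    obtain ⟨i, hi, h⟩ := Set.mem_iUnion₂.1 hx
    exact Set.mem_biUnion (Finset.mem_range.2
      (lt_of_lt_of_le (Finset.mem_range.1 hi) hab)) h
  have hUcompl : Tendsto (fun k => μ ((U k)ᶜ)) atTop (nhds 0) := by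
    have hInter : ⋂ k, (U k)ᶜ = (⋃ s, C s)ᶜ := by
      rw [← Set.compl_iUnion]
      congr 1
      apply Set.Subset.antisymm
      · exact Set.iUnion_subset fun k =>
          Set.iUnion₂_subset fun i _ => Set.subset_iUnion C (e i)
      · intro x hx
        obtain ⟨s, hs⟩ := Set.mem_iUnion.1 hx
        obtain ⟨i, hi⟩ := he s
        exact Set.mem_iUnion.2 ⟨i + 1, Set.mem_biUnion
          (Finset.mem_range.2 (Nat.lt_succ_self i)) (hi ▸ hs)⟩
    have := tendsto_measure_iInter_atTop
      (μ := μ) (s := fun k => (U k)ᶜ)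
      (fun k => (hUm k).compl.nullMeasurableSet)
      (fun a b hab => Set.compl_subset_compl.2 (hUmono hab))
      ⟨0, measure_ne_top μ _⟩
    rw [hInter, hcover] at this
    exact this
  -- main estimate
  rw [ENNReal.tendsto_nhds_zero]
  intro ε hε
  have hε2 : (0 : ENNReal) < ε / 2 := ENNReal.half_pos hε.ne'
  obtain ⟨k, hk⟩ := (ENNReal.tendsto_nhds_zero.1 hUcompl (ε / 2) hε2).exists
  -- the finite sum tends to 0
  have hsum : Tendsto (fun n => ∑ i ∈ Finset.range k,
      ν (symmDiff ((e i)⁻¹ • B n) (B n))) atTop (nhds 0) := by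
    have := tendsto_finset_sum (Finset.range k)
      (fun i _ => hai (e i)⁻¹)
    simpa using this
  filter_upwards [ENNReal.tendsto_nhds_zero.1 hsum (ε / 2) hε2] with n hn
  -- bound μ (D n)
  have hsub : symmDiff ((fun x => θ (g • x)) ⁻¹' B n) (θ ⁻¹' B n)
      ⊆ (U k)ᶜ ∪ ⋃ i ∈ Finset.range k, θ ⁻¹' (symmDiff ((e i)⁻¹ • B n) (B n)) := by
    intro x hx
    by_cases hxU : x ∈ U k
    · obtain ⟨i, hi, hxi⟩ := Set.mem_iUnion₂.1 hxU
      exact Or.inr (Set.mem_biUnion hi (hincl (e i) n ⟨hxi, hx⟩))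
    · exact Or.inl hxU
  calc μ (symmDiff ((fun x => θ (g • x)) ⁻¹' B n) (θ ⁻¹' B n))
      ≤ μ ((U k)ᶜ ∪ ⋃ i ∈ Finset.range k, θ ⁻¹' (symmDiff ((e i)⁻¹ • B n) (B n))) :=
        measure_mono hsub
    _ ≤ μ ((U k)ᶜ) + μ (⋃ i ∈ Finset.range k, θ ⁻¹' (symmDiff ((e i)⁻¹ • B n) (B n))) :=
        measure_union_le _ _
    _ ≤ ε / 2 + ∑ i ∈ Finset.range k, μ (θ ⁻¹' (symmDiff ((e i)⁻¹ • B n) (B n))) := by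
        gcongr
        exact measure_biUnion_finset_le _ _
    _ = ε / 2 + ∑ i ∈ Finset.range k, ν (symmDiff ((e i)⁻¹ • B n) (B n)) := by
        congr 1
        refine Finset.sum_congr rfl fun i _ => ?_
        exact hθ.measure_preimage
          (((hBsm (e i)⁻¹ n).symmDiff (hB n)).nullMeasurableSet)
    _ ≤ ε / 2 + ε / 2 := by gcongr
    _ = ε := ENNReal.add_halves ε
end

section
/- Let Γ and Λ be countable groups with pmp actions on probability spaces (X, μ) and (Y, ν) respectively, and let θ : X → Y be a measure-preserving measurable map such that for every g ∈ Γ, for μ-almost every x ∈ X, θ(g·x) ∈ Λ·θ(x). Let (B_n) be measurable subsets of Y such that for every s ∈ Λ, lim_n ν(⋃_{k ≥ n} (s·B_k Δ B_k)) = 0. Then the sets A_n := θ⁻¹(B_n) satisfy, for every g ∈ Γ, lim_n μ(⋃_{k ≥ n} (g·A_k Δ A_k)) = 0. -/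
/-! A point lies in `⋃ k ≥ n, S k` for every `n` exactly when it lies in `S k` for infinitely
many `k`, so (for finite measures and measurable sets) `μ (⋃ k ≥ n, S k) → 0` says that almost
every point eventually leaves `S k`. Pulled back along `θ`, this property transfers: if
`θ (g⁻¹ • x) = s • θ x`, then `x ∈ g • θ⁻¹' B ∆ θ⁻¹' B` iff `θ x ∈ s⁻¹ • B ∆ B`, and countably
many `s` suffice to cover almost every `x`. -/

open MeasureTheory Filter Set Topology
open scoped Pointwise

section TailUnion

variable {α : Type*}

lemma iInter_biUnion_Ici_eq_setOf_frequently (S : ℕ → Set α) :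
    ⋂ n, ⋃ k ∈ Ici n, S k = {x | ∃ᶠ k in atTop, x ∈ S k} := by
  ext x
  simp [frequently_atTop]

lemma antitone_biUnion_Ici (S : ℕ → Set α) : Antitone fun n => ⋃ k ∈ Ici n, S k :=
  fun _ _ hnm => biUnion_subset_biUnion_left (Ici_subset_Ici.2 hnm)

variable [MeasurableSpace α] {μ : Measure α}

lemma ae_eventually_notMem_of_tendsto_measure_biUnion_Ici {S : ℕ → Set α}
    (h : Tendsto (fun n => μ (⋃ k ∈ Ici n, S k)) atTop (𝓝 0)) :
    ∀ᵐ x ∂μ, ∀ᶠ k in atTop, x ∉ S k := by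
  have hle : ∀ n, μ {x | ∃ᶠ k in atTop, x ∈ S k} ≤ μ (⋃ k ∈ Ici n, S k) := fun n => by
    rw [← iInter_biUnion_Ici_eq_setOf_frequently]
    exact measure_mono (iInter_subset _ n)
  simpa [ae_iff, Filter.Frequently] using
    le_antisymm (ge_of_tendsto' h hle) bot_le

lemma tendsto_measure_biUnion_Ici_zero [IsFiniteMeasure μ] {S : ℕ → Set α}
    (hS : ∀ k, NullMeasurableSet (S k) μ) (h : ∀ᵐ x ∂μ, ∀ᶠ k in atTop, x ∉ S k) :
    Tendsto (fun n => μ (⋃ k ∈ Ici n, S k)) atTop (𝓝 0) := by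
  have hnull : μ (⋂ n, ⋃ k ∈ Ici n, S k) = 0 := by
    rw [iInter_biUnion_Ici_eq_setOf_frequently]
    simpa [ae_iff, Filter.Frequently] using h
  rw [← hnull]
  exact tendsto_measure_iInter_atTop (fun n => .biUnion (to_countable _) fun k _ => hS k)
    (antitone_biUnion_Ici S) ⟨0, measure_ne_top _ _⟩

end TailUnion

lemma mem_symmDiff_smul_preimage_iff {Γ Λ X Y : Type*} [Group Γ] [Group Λ] [MulAction Γ X]
    [MulAction Λ Y] {θ : X → Y} {g : Γ} {s : Λ} {x : X} (hx : θ (g⁻¹ • x) = s • θ x)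
    (B : Set Y) : x ∈ symmDiff (g • (θ ⁻¹' B)) (θ ⁻¹' B) ↔ θ x ∈ symmDiff (s⁻¹ • B) B := by
  simp [mem_symmDiff, mem_smul_set_iff_inv_smul_mem, hx]

theorem stmt_5_general {Γ Λ X Y : Type*} [Group Γ] [Group Λ] [Countable Λ]
    [MeasurableSpace X] [MeasurableSpace Y] [MulAction Γ X] [MulAction Λ Y]
    (μ : Measure X) (ν : Measure Y) [IsProbabilityMeasure μ]
    (hΓ : ∀ g : Γ, MeasurePreserving (fun x => g • x) μ μ)
    (θ : X → Y) (hθ : MeasurePreserving θ μ ν)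
    (hfac : ∀ g : Γ, ∀ᵐ x ∂μ, ∃ s : Λ, θ (g • x) = s • θ x)
    (B : ℕ → Set Y) (hB : ∀ n, MeasurableSet (B n))
    (hai : ∀ s : Λ,
      Tendsto (fun n => ν (⋃ k ∈ Set.Ici n, symmDiff (s • B k) (B k))) atTop (nhds 0)) :
    ∀ g : Γ, Tendsto
      (fun n => μ (⋃ k ∈ Set.Ici n, symmDiff (g • (θ ⁻¹' B k)) (θ ⁻¹' B k)))
      atTop (nhds 0) := by
  intro g
  have hθB : ∀ᵐ x ∂μ, ∀ s : Λ, ∀ᶠ k in atTop, θ x ∉ symmDiff (s • B k) (B k) :=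
    hθ.quasiMeasurePreserving.ae <|
      ae_all_iff.2 fun s => ae_eventually_notMem_of_tendsto_measure_biUnion_Ici (hai s)
  refine tendsto_measure_biUnion_Ici_zero (fun k => ?_) ?_
  · have hA : MeasurableSet (θ ⁻¹' B k) := hθ.measurable (hB k)
    rw [← preimage_smul_inv]
    exact (((hΓ g⁻¹).measurable hA).symmDiff hA).nullMeasurableSet
  · filter_upwards [hfac g⁻¹, hθB] with x ⟨s, hs⟩ hx
    exact (hx s⁻¹).mono fun k hk => (mem_symmDiff_smul_preimage_iff hs (B k)).not.2 hk

/-- Strengthened lifting of almost invariant sequences through a factor map: if `θ : X → Y`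
is measure preserving and maps `Γ`-orbits into `Λ`-orbits a.e., and `(B n)` are measurable
sets with `ν (⋃_{k ≥ n} s • B k ∆ B k) → 0` for all `s ∈ Λ`, then `A n := θ⁻¹ (B n)`
satisfies `μ (⋃_{k ≥ n} g • A k ∆ A k) → 0` for every `g ∈ Γ`. -/
theorem stmt_5 {Γ Λ X Y : Type*} [Group Γ] [Countable Γ] [Group Λ] [Countable Λ]
    [MeasurableSpace X] [MeasurableSpace Y] [MulAction Γ X] [MulAction Λ Y]
    (μ : Measure X) (ν : Measure Y) [IsProbabilityMeasure μ] [IsProbabilityMeasure ν]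
    (hΓ : ∀ g : Γ, MeasurePreserving (fun x => g • x) μ μ)
    (hΛ : ∀ s : Λ, MeasurePreserving (fun y => s • y) ν ν)
    (θ : X → Y) (hθ : MeasurePreserving θ μ ν)
    (hfac : ∀ g : Γ, ∀ᵐ x ∂μ, ∃ s : Λ, θ (g • x) = s • θ x)
    (B : ℕ → Set Y) (hB : ∀ n, MeasurableSet (B n))
    (hai : ∀ s : Λ,
      Tendsto (fun n => ν (⋃ k ∈ Set.Ici n, symmDiff (s • B k) (B k))) atTop (nhds 0)) :
    ∀ g : Γ, Tendsto
      (fun n => μ (⋃ k ∈ Set.Ici n, symmDiff (g • (θ ⁻¹' B k)) (θ ⁻¹' B k)))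
      atTop (nhds 0) :=
  stmt_5_general μ ν hΓ θ hθ hfac B hB hai
end

section
/- For every comeager subset C of (0,1)^ℕ (with the product topology) there exist s, t ∈ C such that the sequence (|s n − t n|)_n converges neither to 0 nor to 1. -/
/-!
Fix any `s ∈ C`. If `|s n - t n|` tends to `0` (resp. `1`), then eventually each `t n` lies in a
fixed closed proper subset of `(0,1)`: the `v` with `|s n - v|` close to the limit, which misses
some point at distance `≥ 1/4` from `s n` (resp. misses `s n` itself). In a product, the points
whose coordinates eventually lie in given closed proper subsets form a meagre set, since a basic
open set constrains only finitely many coordinates. As `(0,1)^ℕ` is Polish, hence Baire, removing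
these two meagre sets from `C` still leaves a point `t`.
-/

open Filter Set Topology

theorem isNowhereDense_pi_of_infinite {ι : Type*} {X : ι → Type*} [∀ i, TopologicalSpace (X i)]
    {I : Set ι} (hI : I.Infinite) {F : ∀ i, Set (X i)} (hF : ∀ i ∈ I, IsClosed (F i))
    (hF_ne : ∀ i ∈ I, F i ≠ univ) : IsNowhereDense (I.pi F) := by
  classical
  rw [(isClosed_set_pi hF).isNowhereDense_iff, eq_empty_iff_forall_notMem]
  intro x hx
  rw [mem_interior_iff_mem_nhds, nhds_pi, Filter.mem_pi'] at hx
  obtain ⟨J, U, hU, hJU⟩ := hx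
  obtain ⟨i, hiI, hiJ⟩ := (hI.sdiff J.finite_toSet).nonempty
  obtain ⟨v, hv⟩ := (ne_univ_iff_exists_notMem _).mp (hF_ne i hiI)
  have hxv : Function.update x i v ∈ (J : Set ι).pi U := fun j hj => by
    rw [Function.update_of_ne (by rintro rfl; exact hiJ hj)]
    exact mem_of_mem_nhds (hU j)
  exact hv (by simpa using hJU hxv i hiI)

theorem isMeagre_setOf_eventually_mem {X : ℕ → Type*} [∀ n, TopologicalSpace (X n)]
    {F : ∀ n, Set (X n)} (hF : ∀ n, IsClosed (F n)) (hF_ne : ∀ n, F n ≠ univ) :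
    IsMeagre {x : ∀ n, X n | ∀ᶠ n in atTop, x n ∈ F n} := by
  have hunion : {x : ∀ n, X n | ∀ᶠ n in atTop, x n ∈ F n} = ⋃ N, (Ici N).pi F := by
    ext x
    simp [eventually_atTop]
  rw [hunion]
  exact isMeagre_iUnion fun N =>
    (isNowhereDense_pi_of_infinite (Ici_infinite N) (fun n _ => hF n)
      (fun n _ => hF_ne n)).isMeagre

theorem isMeagre_setOf_tendsto {X : ℕ → Type*} [∀ n, TopologicalSpace (X n)]
    {Y : Type*} [PseudoMetricSpace Y] {g : ∀ n, X n → Y} (hg : ∀ n, Continuous (g n)) (y : Y)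
    {ε : ℝ} (hε : 0 < ε) (hfar : ∀ n, ∃ v, ε ≤ dist (g n v) y) :
    IsMeagre {x : ∀ n, X n | Tendsto (fun n => g n (x n)) atTop (𝓝 y)} := by
  refine (isMeagre_setOf_eventually_mem (F := fun n => g n ⁻¹' Metric.closedBall y (ε / 2))
    (fun n => Metric.isClosed_closedBall.preimage (hg n)) fun n => ?_).mono fun x hx => ?_
  · obtain ⟨v, hv⟩ := hfar n
    refine (ne_univ_iff_exists_notMem _).mpr ⟨v, ?_⟩
    simp only [mem_preimage, Metric.mem_closedBall, not_le]
    linarith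
  · exact hx.eventually (Metric.closedBall_mem_nhds y (half_pos hε))

section UnitInterval

variable (s : ℕ → Ioo (0 : ℝ) 1)

theorem isMeagre_setOf_tendsto_abs_sub_zero :
    IsMeagre {t : ℕ → Ioo (0 : ℝ) 1 | Tendsto (fun n => |(s n : ℝ) - t n|) atTop (𝓝 0)} := by
  refine isMeagre_setOf_tendsto (g := fun n (v : Ioo (0 : ℝ) 1) => |(s n : ℝ) - v|)
    (fun _ => by fun_prop) 0 (by norm_num : (0 : ℝ) < 1 / 4) fun n => ?_
  simp only [Real.dist_eq, sub_zero, abs_abs, le_abs]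
  rcases lt_or_ge (s n : ℝ) (1 / 2) with h | h
  · exact ⟨⟨3 / 4, by norm_num, by norm_num⟩, .inr (by linarith)⟩
  · exact ⟨⟨1 / 4, by norm_num, by norm_num⟩, .inl (by linarith)⟩

theorem isMeagre_setOf_tendsto_abs_sub_one :
    IsMeagre {t : ℕ → Ioo (0 : ℝ) 1 | Tendsto (fun n => |(s n : ℝ) - t n|) atTop (𝓝 1)} :=
  isMeagre_setOf_tendsto (g := fun n (v : Ioo (0 : ℝ) 1) => |(s n : ℝ) - v|)
    (fun _ => by fun_prop) 1 one_pos fun n => ⟨s n, by simp⟩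

end UnitInterval

/-- For every comeager subset `C` of `(0,1)^ℕ` (product topology) there exist `s, t ∈ C`
such that `|s n - t n|` converges neither to `0` nor to `1`. -/
theorem stmt_7 (C : Set (ℕ → Set.Ioo (0 : ℝ) 1))
    (hC : C ∈ residual (ℕ → Set.Ioo (0 : ℝ) 1)) :
    ∃ s ∈ C, ∃ t ∈ C,
      ¬ Filter.Tendsto (fun n => |(s n : ℝ) - (t n : ℝ)|) Filter.atTop (nhds 0) ∧
      ¬ Filter.Tendsto (fun n => |(s n : ℝ) - (t n : ℝ)|) Filter.atTop (nhds 1) := by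
  have : PolishSpace (Ioo (0 : ℝ) 1) := isOpen_Ioo.polishSpace
  have : Nonempty (Ioo (0 : ℝ) 1) := ⟨⟨1 / 2, by norm_num, by norm_num⟩⟩
  obtain ⟨s, hs⟩ := (dense_of_mem_residual hC).nonempty
  have hgood := inter_mem (inter_mem hC (isMeagre_setOf_tendsto_abs_sub_zero s))
    (isMeagre_setOf_tendsto_abs_sub_one s)
  obtain ⟨t, ⟨htC, ht0⟩, ht1⟩ := (dense_of_mem_residual hgood).nonempty
  exact ⟨s, hs, t, htC, ht0, ht1⟩
end

section
/- Let X, Y, Z be Polish spaces and E, F, R equivalence relations on X, Y, Z respectively. Assume F is generically R-ergodic, i.e. for every Borel map h : Y → Z with (y F y' implies h y R h y') there is a comeager set C ⊆ Y such that h c R h c' for all c, c' ∈ C. Suppose there is a Borel map f : Y → X with (y F y' implies f y E f y') such that no comeager subset of Y is mapped by f into a single E-class. Then there is no Borel reduction of E to R, i.e. no Borel map g : X → Z such that x E x' if and only if g x R g x' for all x, x' ∈ X. -/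
/-- If `F` is generically `R`-ergodic and there is a Borel homomorphism `f` from `F` to `E`
such that no comeager subset of `Y` is mapped by `f` into a single `E`-class, then there is
no Borel reduction of `E` to `R`. -/
theorem stmt_9 {X Y Z : Type*}
    [TopologicalSpace X] [PolishSpace X] [MeasurableSpace X] [BorelSpace X]
    [TopologicalSpace Y] [PolishSpace Y] [MeasurableSpace Y] [BorelSpace Y]
    [TopologicalSpace Z] [PolishSpace Z] [MeasurableSpace Z] [BorelSpace Z]
    (E : X → X → Prop) (F : Y → Y → Prop) (R : Z → Z → Prop)
    (hEe : Equivalence E) (hFe : Equivalence F) (hRe : Equivalence R)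
    (hF : ∀ h : Y → Z, Measurable h → (∀ y y', F y y' → R (h y) (h y')) →
      ∃ C ∈ residual Y, ∀ c ∈ C, ∀ c' ∈ C, R (h c) (h c'))
    (f : Y → X) (hf : Measurable f)
    (hfh : ∀ y y', F y y' → E (f y) (f y'))
    (hnc : ¬ ∃ C ∈ residual Y, ∀ c ∈ C, ∀ c' ∈ C, E (f c) (f c')) :
    ¬ ∃ g : X → Z, Measurable g ∧ ∀ x x', E x x' ↔ R (g x) (g x') := by
  rintro ⟨g, hg, hgr⟩
  obtain ⟨C, hC, hCR⟩ := hF (g ∘ f) (hg.comp hf)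
    (fun y y' hyy' => (hgr _ _).mp (hfh y y' hyy'))
  exact hnc ⟨C, hC, fun c hc c' hc' => (hgr _ _).mpr (hCR c hc c' hc')⟩
end

section
/- Generic ergodicity of ℓ¹-equivalence: every Borel map h : (0,1)^ℕ → ℝ such that h s = h t whenever s − t ∈ ℓ¹ is constant on a comeager subset of (0,1)^ℕ. -/
/-!
Via the coordinatewise sigmoid, `(0,1)^ℕ` is homeomorphic to `ℝ^ℕ`, and changing finitely many
coordinates does not leave an `ℓ¹`-class. So `h` becomes invariant under translation by finitely
supported sequences, which are dense in `ℝ^ℕ`. By the topological zero-one law every superlevel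
set `{h > q}`, `q ∈ ℚ`, is then meagre or comeagre, and these sets separate the values of `h`.
-/

open Set Filter Topology

noncomputable def sigmoidHomeomorph : ℝ ≃ₜ Ioo (0 : ℝ) 1 :=
  ((Real.sigmoid_strictMono.orderIso _).trans
    (OrderIso.setCongr _ _ Real.range_sigmoid)).toHomeomorph

theorem dense_setOf_hasFiniteSupport {ι M : Type*} [TopologicalSpace M] [Zero M] :
    Dense {v : ι → M | v.HasFiniteSupport} := by
  intro x
  refine mem_closure_of_tendsto (f := fun F : Finset ι => (F : Set ι).indicator x) (b := atTop)
    ?_ (.of_forall fun F => F.finite_toSet.subset support_indicator_subset)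
  refine tendsto_pi_nhds.2 fun i => tendsto_const_nhds.congr' ?_
  filter_upwards [eventually_ge_atTop {i}] with F hF
  exact (indicator_of_mem (hF (Finset.mem_singleton_self i)) x).symm

theorem isMeagre_or_mem_residual_of_forall_add_invariant {G : Type*} [TopologicalSpace G]
    [AddGroup G] [IsTopologicalAddGroup G] [BaireSpace G] {D : Set G} (hD : Dense D)
    {A : Set G} (hA : BaireMeasurableSet A) (hinv : ∀ d ∈ D, (· + d) ⁻¹' A = A) :
    IsMeagre A ∨ A ∈ residual G := by
  obtain ⟨U, hUo, hAU⟩ := hA.residualEq_isOpen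
  rcases U.eq_empty_or_nonempty with rfl | hUne
  · exact .inl (eventuallyEq_empty.1 hAU)
  refine .inr ((congr_sets hAU.mem_iff).2 (residual_of_dense_open hUo ?_))
  refine dense_iff_inter_open.2 fun W hWo hWne => not_not.1 fun hWU => ?_
  -- Some `d ∈ D` moves a point `-u ∈ U` into `W`, so `U ∩ (· + d) ⁻¹' W` is nonempty and open,
  -- yet it lies in `U \ (· + d) ⁻¹' U`, which is meagre because `A` is `d`-invariant.
  obtain ⟨d, hdD, u, hu, w, hw, hd⟩ :=
    hD.exists_mem_open hUo.neg.add_right (hUne.neg.add hWne)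
  have hAd : (· + d) ⁻¹' A =ᵇ (· + d) ⁻¹' U :=
    hAU.comp_tendsto <|
      tendsto_residual_of_isOpenMap (continuous_add_const d) (isOpenMap_add_right d)
  have hmeagre : IsMeagre (U \ (· + d) ⁻¹' U) := by
    have h := hAU.symm.diff (hinv d hdD ▸ hAd).symm
    rw [sdiff_self] at h
    exact eventuallyEq_empty.1 h
  have hdW : -u + d ∈ W := by rwa [← hd, neg_add_cancel_left]
  have hsub : U ∩ (· + d) ⁻¹' W ⊆ U \ (· + d) ⁻¹' U :=
    fun x ⟨hxU, hxW⟩ => ⟨hxU, fun hxU' => hWU ⟨_, hxW, hxU'⟩⟩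
  exact not_isMeagre_of_isOpen (hUo.inter (hWo.preimage (continuous_add_const d)))
    ⟨-u, hu, hdW⟩ (hmeagre.mono hsub)

theorem exists_mem_residual_forall_eq_of_separating {X Y ι : Type*} [TopologicalSpace X]
    [Nonempty Y] [Countable ι] (f : X → Y) (s : ι → Set Y)
    (hsep : ∀ y z, (∀ i, y ∈ s i ↔ z ∈ s i) → y = z)
    (h01 : ∀ i, IsMeagre (f ⁻¹' s i) ∨ f ⁻¹' s i ∈ residual X) :
    ∃ C ∈ residual X, ∃ c, ∀ x ∈ C, f x = c := by
  classical
  set C := ⋂ i, {x | f x ∈ s i ↔ f ⁻¹' s i ∈ residual X}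
  have hC : C ∈ residual X := countable_iInter_mem.2 fun i => by
    by_cases hi : f ⁻¹' s i ∈ residual X
    · simp only [hi, iff_true]; exact hi
    · simp only [hi, iff_false]; exact (h01 i).resolve_right hi
  refine ⟨C, hC, ?_⟩
  rcases C.eq_empty_or_nonempty with hCe | ⟨x₀, hx₀⟩
  · exact ⟨Classical.arbitrary Y, by simp [hCe]⟩
  · refine ⟨f x₀, fun x hx => hsep _ _ fun i => ?_⟩
    exact (mem_iInter.1 hx i).trans (mem_iInter.1 hx₀ i).symm

/-- Generic ergodicity of `ℓ¹`-equivalence on `(0,1)^ℕ`: every Borel map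
`h : (0,1)^ℕ → ℝ` which is invariant under `ℓ¹`-differences is constant on a comeager set. -/
theorem stmt_11 (h : (ℕ → Set.Ioo (0 : ℝ) 1) → ℝ) (hm : Measurable h)
    (hinv : ∀ s t : ℕ → Set.Ioo (0 : ℝ) 1,
      Summable (fun n => |(s n : ℝ) - (t n : ℝ)|) → h s = h t) :
    ∃ C ∈ residual (ℕ → Set.Ioo (0 : ℝ) 1), ∃ c : ℝ, ∀ x ∈ C, h x = c := by
  let σ : (ℕ → ℝ) ≃ₜ (ℕ → Ioo (0 : ℝ) 1) := .piCongrRight fun _ => sigmoidHomeomorph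
  have hinv_finite : ∀ v : ℕ → ℝ, v.HasFiniteSupport → ∀ x, h (σ (x + v)) = h (σ x) :=
    fun v hv x => hinv _ _ <| summable_of_hasFiniteSupport <| hv.subset fun n hn hvn =>
      hn (by simp [σ, hvn])
  have h01 (q : ℚ) :
      IsMeagre ((h ∘ σ) ⁻¹' Ioi (q : ℝ)) ∨ (h ∘ σ) ⁻¹' Ioi (q : ℝ) ∈ residual _ :=
    isMeagre_or_mem_residual_of_forall_add_invariant dense_setOf_hasFiniteSupport
      ((hm.comp σ.measurable) measurableSet_Ioi).baireMeasurableSet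
      fun v hv => by ext x; simp [hinv_finite v hv x]
  obtain ⟨C, hC, c, hc⟩ :=
    exists_mem_residual_forall_eq_of_separating (h ∘ σ) _
      (fun _ _ => eq_of_forall_rat_lt_iff_lt) h01
  exact ⟨σ '' C, σ.residual_map_eq ▸ image_mem_map hC, c, forall_mem_image.2 hc⟩
end

section
/- Non-smoothness criterion: let E be an equivalence relation on a Polish space X and suppose there is a Borel map f : (0,1)^ℕ → X such that (1) f s E f t whenever s − t ∈ ℓ¹, and (2) there is no comeager set A ⊆ (0,1)^ℕ whose image f(A) is contained in a single E-class. Then E is not smooth: there is no Borel map h : X → ℝ such that x E y if and only if h x = h y. -/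
/-!
Composing a Borel reduction `h` of `E` with `f` and with a coordinatewise homeomorphism
`ℝ ≃ₜ (0,1)` gives a Borel map on `ℕ → ℝ` that is invariant under changing finitely many
coordinates. By the topological zero-one law, the preimage of every Borel set under it is meagre
or comeagre; as the Borel sets separate the points of `ℝ`, the map is constant on a comeagre set,
and `f` sends (the image of) that set into a single `E`-class.
-/

open Set Filter Topology

theorem isMeagre_of_forall_exists_isOpen {Z : Type*} [TopologicalSpace Z]
    [SecondCountableTopology Z] {s : Set Z}
    (h : ∀ x, ∃ U, IsOpen U ∧ x ∈ U ∧ IsMeagre (s ∩ U)) : IsMeagre s := by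
  choose U hUo hxU hsU using h
  obtain ⟨T, hTc, hTU⟩ := TopologicalSpace.isOpen_iUnion_countable U hUo
  have hcover : s ⊆ ⋃ x ∈ T, s ∩ U x := by
    intro y hy
    have hyT : y ∈ ⋃ x ∈ T, U x := hTU ▸ mem_iUnion.mpr ⟨y, hxU y⟩
    obtain ⟨x, hxT, hyx⟩ := mem_iUnion₂.mp hyT
    exact mem_biUnion hxT ⟨hy, hyx⟩
  exact (isMeagre_biUnion hTc fun x _ => hsU x).mono hcover

theorem exists_mem_eventuallyEq_of_isOpen {ι Y : Type*} [TopologicalSpace Y]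
    {U : Set (ι → Y)} (hU : IsOpen U) (hne : U.Nonempty) (x : ι → Y) :
    ∃ y ∈ U, y =ᶠ[cofinite] x := by
  classical
  obtain ⟨a, ha⟩ := hne
  obtain ⟨F, u, hu, hFU⟩ := isOpen_pi_iff.mp hU a ha
  refine ⟨F.piecewise a x, hFU fun i hi => ?_, ?_⟩
  · rw [F.piecewise_eq_of_mem _ _ hi]
    exact (hu i hi).2
  · filter_upwards [F.finite_toSet.compl_mem_cofinite] with i hi
    exact F.piecewise_eq_of_notMem _ _ hi

theorem summable_abs_sub_of_eventuallyEq {α : Type*} {s t : α → ℝ}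
    (hst : s =ᶠ[cofinite] t) : Summable fun n => |s n - t n| :=
  summable_of_hasFiniteSupport <|
    (eventually_cofinite.mp hst).subset fun n hn hsn => hn (by simp [hsn])

section ZeroOne

variable {ι G : Type*} [Countable ι] [TopologicalSpace G] [AddGroup G] [ContinuousAdd G]
  [SecondCountableTopology G]

theorem isMeagre_or_mem_residual_of_eventuallyEq_invariant {A : Set (ι → G)}
    (hA : BaireMeasurableSet A) (hinv : ∀ x y, x =ᶠ[cofinite] y → x ∈ A → y ∈ A) :
    IsMeagre A ∨ A ∈ residual (ι → G) := by
  obtain ⟨U, hUo, hAU⟩ := hA.residualEq_isOpen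
  rcases U.eq_empty_or_nonempty with rfl | hne
  · left
    filter_upwards [hAU] with z hz
    exact (Iff.of_eq hz).mp
  right
  have hUA : IsMeagre (U \ A) := by
    filter_upwards [hAU] with z hz
    exact fun hzUA => hzUA.2 ((Iff.of_eq hz).mpr hzUA.1)
  rw [← compl_compl A]
  refine isMeagre_of_forall_exists_isOpen fun x => ?_
  obtain ⟨y, hyU, hyx⟩ := exists_mem_eventuallyEq_of_isOpen hUo hne x
  -- translating by `-x + y` moves `x` into `U` and changes only finitely many coordinates
  let τ := Homeomorph.addRight (-x + y)
  refine ⟨τ ⁻¹' U, hUo.preimage τ.continuous, by simpa [τ] using hyU,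
    (hUA.preimage_of_isOpenMap τ.continuous τ.isOpenMap).mono ?_⟩
  rintro z ⟨hzA, hzU⟩
  refine ⟨hzU, fun hτz => hzA (hinv _ _ ?_ hτz)⟩
  filter_upwards [hyx] with i hi
  simp [τ, hi]

theorem exists_eventuallyEq_const_of_eventuallyEq_invariant {β : Type*} [Nonempty β]
    [MeasurableSpace β] [HasCountableSeparatingOn β MeasurableSet univ]
    [MeasurableSpace G] [BorelSpace G] {g : (ι → G) → β} (hg : Measurable g)
    (hinv : ∀ x y, x =ᶠ[cofinite] y → g x = g y) :
    ∃ c, g =ᶠ[residual (ι → G)] Function.const _ c := by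
  refine exists_eventuallyEq_const_of_forall_separating MeasurableSet fun V hV => ?_
  refine (isMeagre_or_mem_residual_of_eventuallyEq_invariant (hg hV).baireMeasurableSet
    fun x y hxy hx => ?_).symm
  rwa [mem_preimage, ← hinv x y hxy]

end ZeroOne

noncomputable def Real.sigmoidOrderIso : ℝ ≃o Ioo (0 : ℝ) 1 :=
  (Real.sigmoid_strictMono.orderIso _).trans (OrderIso.setCongr _ _ Real.range_sigmoid)

theorem stmt_12_general {X : Type*}
    [MeasurableSpace X]
    (E : X → X → Prop)
    (f : (ℕ → Set.Ioo (0 : ℝ) 1) → X) (hf : Measurable f)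
    (h1 : ∀ s t : ℕ → Set.Ioo (0 : ℝ) 1,
      Summable (fun n => |(s n : ℝ) - (t n : ℝ)|) → E (f s) (f t))
    (h2 : ¬ ∃ A ∈ residual (ℕ → Set.Ioo (0 : ℝ) 1), ∀ x ∈ A, ∀ y ∈ A, E (f x) (f y)) :
    ¬ ∃ h : X → ℝ, Measurable h ∧ ∀ x y, E x y ↔ h x = h y := by
  rintro ⟨h, hh, hE⟩
  let Φ : (ℕ → ℝ) ≃ₜ (ℕ → Ioo (0 : ℝ) 1) :=
    .piCongrRight fun _ => Real.sigmoidOrderIso.toHomeomorph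
  obtain ⟨c, hc⟩ := exists_eventuallyEq_const_of_eventuallyEq_invariant (g := h ∘ f ∘ Φ)
    (hh.comp (hf.comp Φ.continuous.measurable)) fun x y hxy => by
      refine (hE _ _).mp (h1 _ _ (summable_abs_sub_of_eventuallyEq ?_))
      filter_upwards [hxy] with n hn
      simp [Φ, hn]
  have hconst : ∀ᶠ s in residual _, h (f s) = c := by
    rw [← Φ.residual_map_eq]
    exact hc
  exact h2 ⟨_, hconst, fun x hx y hy => (hE _ _).mpr (hx.trans hy.symm)⟩

/-- Non-smoothness criterion: if `E` is an equivalence relation on a Polish space `X` and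
there is a Borel map `f : (0,1)^ℕ → X` sending `ℓ¹`-equivalent sequences to `E`-equivalent
points, such that no comeager subset of `(0,1)^ℕ` is mapped into a single `E`-class, then
`E` is not smooth. -/
theorem stmt_12 {X : Type*}
    [TopologicalSpace X] [PolishSpace X] [MeasurableSpace X] [BorelSpace X]
    (E : X → X → Prop) (hEe : Equivalence E)
    (f : (ℕ → Set.Ioo (0 : ℝ) 1) → X) (hf : Measurable f)
    (h1 : ∀ s t : ℕ → Set.Ioo (0 : ℝ) 1,
      Summable (fun n => |(s n : ℝ) - (t n : ℝ)|) → E (f s) (f t))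
    (h2 : ¬ ∃ A ∈ residual (ℕ → Set.Ioo (0 : ℝ) 1), ∀ x ∈ A, ∀ y ∈ A, E (f x) (f y)) :
    ¬ ∃ h : X → ℝ, Measurable h ∧ ∀ x y, E x y ↔ h x = h y :=
  stmt_12_general E f hf h1 h2
end
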